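/- Let R = K[x] and P_n the two-term complex R --x^n--> R in degrees -1, 0. For positive integers l, m, n and indices max(0, m-l) ≤ i < m, max(0, n-m) ≤ j < n, the composition x^j_{m,n} ∘ x^i_{l,m} in K^b(proj R) equals x^{i+j}_{l,n} if i+j < n, and equals 0 otherwise. -/

import Mathlib

/- Setup: `R = K[x]`, the two-term cochain complexes `P n = (R --x^n--> R)` in degrees
`-1, 0`, and the morphisms `x^i_{m,n}` and `y^i_{m,n}` in the bounded homotopy category
`K^b(proj R)` (realized inside the homotopy category of cochain complexes of
`R`-modules). -/

noncomputable section
open CategoryTheory CategoryTheory.Limits Polynomial ZeroObject CategoryTheory.Pretriangulated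

variable (K : Type) [Field K]

abbrev RMod := ModuleCat.of (Polynomial K) (Polynomial K)

/-- Multiplication by `x^a` on `R = K[x]`. -/
def mulX (a : ℕ) : RMod K ⟶ RMod K :=
  ModuleCat.ofHom (LinearMap.mulLeft (Polynomial K) ((X : Polynomial K) ^ a))

lemma mulX_comp (a b : ℕ) : mulX K a ≫ mulX K b = mulX K (a + b) := by
  apply ModuleCat.hom_ext; apply LinearMap.ext; intro x
  simp [mulX, pow_add]; ring

/-- The graded pieces of the two-term complexes `P n`. -/
def Pobj : ℤ → ModuleCat (Polynomial K) := fun i =>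
  if i = -1 ∨ i = 0 then RMod K else ModuleCat.of (Polynomial K) PUnit

lemma PobjNeg : Pobj K (-1) = RMod K := by simp [Pobj]
lemma PobjZero : Pobj K 0 = RMod K := by simp [Pobj]

/-- The differential of `P n`. -/
def Pd (n : ℕ) : ∀ i : ℤ, Pobj K i ⟶ Pobj K (i + 1) := fun i =>
  if h : i = -1 then
    eqToHom (by rw [h, PobjNeg]) ≫ mulX K n ≫ eqToHom (by rw [h]; norm_num [PobjZero])
  else 0

/-- The two-term complex `P n = (R --x^n--> R)` in degrees `-1, 0`. -/
def P (n : ℕ) : CochainComplex (ModuleCat (Polynomial K)) ℤ :=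
  CochainComplex.of (Pobj K) (Pd K n) (fun i => by
    by_cases h : i = -1
    · have h2 : Pd K n (i + 1) = 0 := dif_neg (by omega)
      rw [h2, Limits.comp_zero]
    · have h1 : Pd K n i = 0 := dif_neg h
      rw [h1, Limits.zero_comp])

lemma P_d_eq_zero (n : ℕ) (i j : ℤ) (hi : i ≠ -1) : (P K n).d i j = 0 := by
  by_cases h : i + 1 = j
  · subst h
    show CochainComplex.of.d (Pobj K) (Pd K n) i (i + 1) = 0
    rw [CochainComplex.of_d]
    exact dif_neg hi
  · exact HomologicalComplex.shape _ _ _ (by simpa using h)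

/-- The components of the chain map which is multiplication by `x^a` in degree `-1`
and by `x^b` in degree `0`. -/
def xComp (a b : ℕ) : ∀ i : ℤ, Pobj K i ⟶ Pobj K i := fun i =>
  if h : i = -1 then eqToHom (by rw [h, PobjNeg]) ≫ mulX K a ≫ eqToHom (by rw [h, PobjNeg])
  else if h0 : i = 0 then
    eqToHom (by rw [h0, PobjZero]) ≫ mulX K b ≫ eqToHom (by rw [h0, PobjZero])
  else 0

/-- The chain map `P m ⟶ P n` which is multiplication by `x^a` in degree `-1` and by
`x^b` in degree `0`; it commutes with the differentials since `a + n = b + m`. -/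
def xMap (m n a b : ℕ) (hab : a + n = b + m) : P K m ⟶ P K n :=
  CochainComplex.ofHom (X := P K m) (Y := P K n) (xComp K a b) (by
    intro i
    simp only [P, CochainComplex.of_d]
    by_cases hi : i = -1
    · subst hi
      show xComp K a b (-1) ≫ Pd K n (-1) = Pd K m (-1) ≫ xComp K a b (-1 + 1)
      rw [show xComp K a b (-1 + 1) = xComp K a b 0 from rfl]
      rw [show xComp K a b (-1) = eqToHom (PobjNeg K) ≫ mulX K a ≫ eqToHom (PobjNeg K).symm
          from dif_pos rfl]
      rw [show xComp K a b 0 = eqToHom (PobjZero K) ≫ mulX K b ≫ eqToHom (PobjZero K).symm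
          from by rw [xComp, dif_neg (by norm_num), dif_pos rfl]]
      rw [show Pd K n (-1) = eqToHom (PobjNeg K) ≫ mulX K n ≫
            eqToHom (by norm_num [PobjZero] : RMod K = Pobj K (-1 + 1))
          from dif_pos rfl]
      rw [show Pd K m (-1) = eqToHom (PobjNeg K) ≫ mulX K m ≫
            eqToHom (by norm_num [PobjZero] : RMod K = Pobj K (-1 + 1))
          from dif_pos rfl]
      simp only [Category.assoc, eqToHom_trans_assoc, eqToHom_refl, Category.id_comp]
      try simp only [Category.comp_id]
      rw [← Category.assoc (mulX K a), ← Category.assoc (mulX K m), mulX_comp, mulX_comp, hab,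
        Nat.add_comm b m]
    · have h1 : Pd K m i = 0 := dif_neg hi
      have h2 : Pd K n i = 0 := dif_neg hi
      rw [h1, h2, Limits.comp_zero, Limits.zero_comp])

/-- The components of `y^i_{m,n}`. -/
def yComp (m n a : ℕ) : ∀ i : ℤ, (P K m).X i ⟶ ((P K n)⟦(1 : ℤ)⟧).X i := fun i =>
  if h : i = -1 then
    eqToHom (by rw [h]; exact PobjNeg K) ≫ mulX K a ≫
      eqToHom (by rw [h]; show RMod K = Pobj K (-1 + 1); norm_num [PobjZero])
  else 0

/-- The chain map `P m ⟶ (P n)⟦1⟧` whose only nonzero component is multiplication by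
`x^a` in degree `-1` (landing in the degree `0` part of `P n`). -/
def yMap (m n a : ℕ) : P K m ⟶ (P K n)⟦(1 : ℤ)⟧ where
  f := yComp K m n a
  comm' := fun i j hij => by
    have hj : i + 1 = j := hij
    have hY : ∀ i' j' : ℤ, i' ≠ -2 → ((P K n)⟦(1 : ℤ)⟧).d i' j' = 0 := fun i' j' h => by
      rw [CochainComplex.shiftFunctor_obj_d',
        P_d_eq_zero K n _ _ (by change i' + 1 ≠ -1; omega), smul_zero]
      rfl
    by_cases hi : i = -1
    · rw [hY i j (by omega), Limits.comp_zero,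
        show yComp K m n a j = 0 from dif_neg (by omega), Limits.comp_zero]
    · rw [show yComp K m n a i = 0 from dif_neg hi, Limits.zero_comp]
      by_cases hj' : j = -1
      · rw [P_d_eq_zero K m i j hi, Limits.zero_comp]
      · rw [show yComp K m n a j = 0 from dif_neg hj', Limits.comp_zero]

/-- The homotopy category of cochain complexes of `K[x]`-modules, in which the bounded
homotopy category of finitely generated projectives embeds fully faithfully. -/
abbrev KbT := HomotopyCategory (ModuleCat (Polynomial K)) (ComplexShape.up ℤ)

abbrev Q : CochainComplex (ModuleCat (Polynomial K)) ℤ ⥤ KbT K :=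
  HomotopyCategory.quotient _ _

/-- `P n` as an object of the homotopy category. -/
abbrev Pbar (n : ℕ) : KbT K := (Q K).obj (P K n)

/-- The morphism `x^i_{m,n} : P m ⟶ P n` in the homotopy category, defined for
`max (0, n - m) ≤ i` (expressed with truncated subtraction on `ℕ`); in degree `-1` it is
multiplication by `x^(i+m-n)` and in degree `0` multiplication by `x^i`. -/
def xbar (m n i : ℕ) (h : n - m ≤ i) : Pbar K m ⟶ Pbar K n :=
  (Q K).map (xMap K m n (i + m - n) i (by omega))

/-- The identification `Q(P n ⟦1⟧) ≅ (Q (P n))⟦1⟧` in the homotopy category. -/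
def shIso (n : ℕ) : (Q K).obj ((P K n)⟦(1 : ℤ)⟧) ≅ (Pbar K n)⟦(1 : ℤ)⟧ :=
  ((Q K).commShiftIso (1 : ℤ)).app (P K n)

/-- The morphism `y^i_{m,n} : P m ⟶ (P n)[1]` in the homotopy category, defined for
`i ≤ m`; its only nonzero component is multiplication by `x^(m-i)` in degree `-1`. -/
def ybar (m n i : ℕ) (_h : i ≤ m) : Pbar K m ⟶ (Pbar K n)⟦(1 : ℤ)⟧ :=
  (Q K).map (yMap K m n (m - i)) ≫ (shIso K n).hom

/-! Composing the chain maps `(x^a, x^b)` adds exponents degreewise, so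
`x^j_{m,n} ∘ x^i_{l,m}` is represented by `(x^(i+j+l-n), x^(i+j))`, which is `x^(i+j)_{l,n}`.
When `i + j ≥ n`, multiplication by `x^(i+j-n)` from degree `0` to degree `-1` is a null-homotopy:
composed with the differential `x^n` on either side it gives `x^(i+j)` in degree `0` and
`x^(i+j+l-n)` in degree `-1`. -/

lemma mulX_comp_assoc (a b : ℕ) {Z : ModuleCat (Polynomial K)} (h : RMod K ⟶ Z) :
    mulX K a ≫ mulX K b ≫ h = mulX K (a + b) ≫ h := by
  rw [← Category.assoc, mulX_comp]

lemma P_X_neg_one (n : ℕ) : (P K n).X (-1) = RMod K := PobjNeg K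

lemma P_X_zero (n : ℕ) : (P K n).X 0 = RMod K := PobjZero K

lemma eqToHom_mulX_comp {A B C : ModuleCat (Polynomial K)} (hA : A = RMod K)
    (hB : RMod K = B) (hB' : B = RMod K) (hC : RMod K = C) (a b : ℕ) :
    (eqToHom hA ≫ mulX K a ≫ eqToHom hB) ≫ eqToHom hB' ≫ mulX K b ≫ eqToHom hC =
      eqToHom hA ≫ mulX K (a + b) ≫ eqToHom hC := by
  subst hB
  simp [mulX_comp_assoc]

lemma xMap_f_neg_one (m n a b : ℕ) (hab : a + n = b + m) :
    (xMap K m n a b hab).f (-1) =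
      eqToHom (P_X_neg_one K m) ≫ mulX K a ≫ eqToHom (P_X_neg_one K n).symm := by
  show xComp K a b (-1) = _
  rw [xComp, dif_pos rfl]
  rfl

lemma xMap_f_zero (m n a b : ℕ) (hab : a + n = b + m) :
    (xMap K m n a b hab).f 0 = eqToHom (P_X_zero K m) ≫ mulX K b ≫ eqToHom (P_X_zero K n).symm := by
  show xComp K a b 0 = _
  rw [xComp, dif_neg (by norm_num), dif_pos rfl]
  rfl

lemma xMap_f_of_ne (m n a b : ℕ) (hab : a + n = b + m) {i : ℤ} (h₁ : i ≠ -1) (h₀ : i ≠ 0) :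
    (xMap K m n a b hab).f i = 0 := by
  show xComp K a b i = _
  rw [xComp, dif_neg h₁, dif_neg h₀]
  rfl

lemma xComp_comp (a b a' b' : ℕ) (i : ℤ) :
    xComp K a b i ≫ xComp K a' b' i = xComp K (a + a') (b + b') i := by
  unfold xComp
  split_ifs <;> simp [mulX_comp_assoc]

lemma xMap_comp {l m n a b a' b' a'' b'' : ℕ} (hab : a + m = b + l) (hab' : a' + n = b' + m)
    (hab'' : a'' + n = b'' + l) (ha : a + a' = a'') (hb : b + b' = b'') :
    xMap K l m a b hab ≫ xMap K m n a' b' hab' = xMap K l n a'' b'' hab'' := by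
  subst ha hb
  exact HomologicalComplex.hom_ext _ _ fun i => xComp_comp K a b a' b' i

lemma P_d_neg_one (n : ℕ) :
    (P K n).d (-1) 0 = eqToHom (P_X_neg_one K n) ≫ mulX K n ≫ eqToHom (P_X_zero K n).symm := by
  show CochainComplex.of.d (Pobj K) (Pd K n) (-1) (-1 + 1) = _
  rw [CochainComplex.of_d]
  exact dif_pos rfl

def xHomotopyHom (l n c : ℕ) (i j : ℤ) : (P K l).X i ⟶ (P K n).X j :=
  if h : i = 0 ∧ j = -1 then
    eqToHom (by rw [h.1, P_X_zero]) ≫ mulX K c ≫ eqToHom (by rw [h.2, P_X_neg_one])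
  else 0

lemma xHomotopyHom_zero_neg_one (l n c : ℕ) :
    xHomotopyHom K l n c 0 (-1) = eqToHom (P_X_zero K l) ≫ mulX K c ≫ eqToHom (P_X_neg_one K n).symm :=
  dif_pos ⟨rfl, rfl⟩

lemma xHomotopyHom_of_ne (l n c : ℕ) {i j : ℤ} (h : ¬(i = 0 ∧ j = -1)) : xHomotopyHom K l n c i j = 0 :=
  dif_neg h

def xMapHomotopyZero {l n a b : ℕ} (hab : a + n = b + l) (hb : n ≤ b) :
    Homotopy (xMap K l n a b hab) 0 where
  hom := xHomotopyHom K l n (b - n)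
  zero i j hij := xHomotopyHom_of_ne K _ _ _ fun ⟨hi, hj⟩ => hij (by simp [hi, hj])
  comm i := by
    obtain rfl | h₀ := eq_or_ne i 0
    · rw [dNext_eq _ (show (ComplexShape.up ℤ).Rel 0 1 from rfl),
        prevD_eq _ (show (ComplexShape.up ℤ).Rel (-1) 0 from rfl),
        xHomotopyHom_of_ne K _ _ _ (by omega), xHomotopyHom_zero_neg_one, xMap_f_zero,
        P_d_neg_one, eqToHom_mulX_comp, Nat.sub_add_cancel hb]
      simp
    obtain rfl | h₁ := eq_or_ne i (-1)
    · rw [dNext_eq _ (show (ComplexShape.up ℤ).Rel (-1) 0 from rfl),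
        prevD_eq _ (show (ComplexShape.up ℤ).Rel (-2) (-1) from rfl),
        xHomotopyHom_zero_neg_one, xHomotopyHom_of_ne K _ _ _ (by omega), xMap_f_neg_one,
        P_d_neg_one, eqToHom_mulX_comp, show l + (b - n) = a by omega]
      simp
    · rw [dNext_eq _ (show (ComplexShape.up ℤ).Rel i (i + 1) from rfl),
        prevD_eq _ (show (ComplexShape.up ℤ).Rel (i - 1) i from sub_add_cancel i 1),
        xHomotopyHom_of_ne K _ _ _ (by omega), xHomotopyHom_of_ne K _ _ _ (by omega),
        xMap_f_of_ne K _ _ _ _ _ h₁ h₀]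
      simp

lemma Q_map_xMap_eq_zero {l n a b : ℕ} (hab : a + n = b + l) (hb : n ≤ b) :
    (Q K).map (xMap K l n a b hab) = 0 :=
  (HomotopyCategory.eq_of_homotopy _ _ (xMapHomotopyZero K hab hb)).trans ((Q K).map_zero _ _)

/-- for positive `l, m, n` and `max (0, m-l) ≤ i < m`,
`max (0, n-m) ≤ j < n`, the composition `x^j_{m,n} ∘ x^i_{l,m}` equals `x^(i+j)_{l,n}`
if `i + j < n`, and `0` otherwise. -/
theorem xbar_comp_xbar (l m n : ℕ) (i j : ℕ) (hi : m - l ≤ i) (hj : n - m ≤ j) :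
    xbar K l m i hi ≫ xbar K m n j hj =
      if i + j < n then xbar K l n (i + j) (by omega) else 0 := by
  rw [xbar, xbar, ← Functor.map_comp, xMap_comp K (a'' := i + j + l - n) _ _ _ (by omega) rfl]
  split_ifs with h
  · rfl
  · exact Q_map_xMap_eq_zero K _ (by omega)
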